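/- The conditional probability path p_t = N(t x₁ + (1−t) x₀, σ² I_d) with conditional vector field u_t(x | x₀, x₁) = x₁ − x₀ satisfies the continuity equation ∂_t p_t + ∇·(p_t u_t) = 0 on ℝ^d for t ∈ (0,1). -/

import Mathlib

/-!
Since `μ_t = x₀ + t (x₁ - x₀)`, the path is the time-zero density translated along the constant
field `v = x₁ - x₀`: `p_t(x) = p_0(x - t v)`. Any such translate `g(x - t v)` of a differentiable `g`
has `∂_t p_t = -Dg(x - t v) v = -∑ᵢ vᵢ ∂ᵢ p_t`, and for constant `v` the right-hand side is
`-∇·(p_t v)`.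
-/

/-- Density of `N(t x₁ + (1-t) x₀, σ² I_d)` at `x`. -/
noncomputable def gaussPath (d : ℕ) (x₀ x₁ : Fin d → ℝ) (σ : ℝ) (t : ℝ)
    (x : Fin d → ℝ) : ℝ :=
  (2 * Real.pi * σ ^ 2) ^ (-(d : ℝ) / 2) *
    Real.exp (-(∑ i, (x i - ((1 - t) * x₀ i + t * x₁ i)) ^ 2) / (2 * σ ^ 2))

section Transport

variable {ι : Type*} [Fintype ι] [DecidableEq ι]

theorem continuity_equation_of_transport {F : ℝ → (ι → ℝ) → ℝ} {g : (ι → ℝ) → ℝ}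
    {v : ι → ℝ} (hF : ∀ s y, F s y = g (y - s • v)) {t : ℝ} {x : ι → ℝ}
    (hg : DifferentiableAt ℝ g (x - t • v)) :
    deriv (fun s => F s x) t + ∑ i, deriv (fun xi => F t (Function.update x i xi) * v i) (x i)
      = 0 := by
  set L := fderiv ℝ g (x - t • v)
  have htime : HasDerivAt (fun s => F s x) (L (-v)) t := by
    have hpath : HasDerivAt (fun s : ℝ => x - s • v) (-v) t := by
      simpa using ((hasDerivAt_id t).smul_const v).const_sub x
    simp only [hF]
    exact hg.hasFDerivAt.comp_hasDerivAt t hpath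
  have hspace (i : ι) :
      HasDerivAt (fun xi => F t (Function.update x i xi) * v i) (L (Pi.single i (v i))) (x i) := by
    have hline : HasDerivAt (fun xi => Function.update x i xi - t • v) (Pi.single i 1) (x i) :=
      (hasDerivAt_update x i (x i)).sub_const _
    have := (hg.hasFDerivAt.comp_hasDerivAt_of_eq (x i) hline (by simp)).mul_const (v i)
    rw [mul_comm, ← smul_eq_mul, ← map_smul, ← Pi.single_smul', smul_eq_mul, mul_one] at this
    simp only [hF]
    exact this
  rw [htime.deriv, Finset.sum_congr rfl fun i _ => (hspace i).deriv, ← map_sum,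
    Finset.univ_sum_single, ← map_add, neg_add_cancel, map_zero]

end Transport

theorem gaussPath_eq_transport (d : ℕ) (x₀ x₁ : Fin d → ℝ) (σ t : ℝ) (x : Fin d → ℝ) :
    gaussPath d x₀ x₁ σ t x = gaussPath d x₀ x₁ σ 0 (x - t • (x₁ - x₀)) := by
  unfold gaussPath
  congr 5 with i
  simp only [Pi.sub_apply, Pi.smul_apply, smul_eq_mul]
  ring

theorem differentiable_gaussPath (d : ℕ) (x₀ x₁ : Fin d → ℝ) (σ t : ℝ) :
    Differentiable ℝ (gaussPath d x₀ x₁ σ t) := by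
  unfold gaussPath
  fun_prop

theorem gauss_path_continuity_equation_general (d : ℕ) (x₀ x₁ : Fin d → ℝ) (σ : ℝ) :
    ∀ t ∈ Set.Ioo (0:ℝ) 1, ∀ x : Fin d → ℝ,
      deriv (fun s => gaussPath d x₀ x₁ σ s x) t +
        ∑ i, deriv
          (fun xi => gaussPath d x₀ x₁ σ t (Function.update x i xi) *
            (x₁ i - x₀ i)) (x i) = 0 := fun t _ x =>
  continuity_equation_of_transport (t := t) (x := x) (v := x₁ - x₀)
    (gaussPath_eq_transport d x₀ x₁ σ) (differentiable_gaussPath d x₀ x₁ σ 0 _)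

theorem gauss_path_continuity_equation (d : ℕ) (x₀ x₁ : Fin d → ℝ) (σ : ℝ)
    (hσ : 0 < σ) :
    ∀ t ∈ Set.Ioo (0:ℝ) 1, ∀ x : Fin d → ℝ,
      deriv (fun s => gaussPath d x₀ x₁ σ s x) t +
        ∑ i, deriv
          (fun xi => gaussPath d x₀ x₁ σ t (Function.update x i xi) *
            (x₁ i - x₀ i)) (x i) = 0 :=
  gauss_path_continuity_equation_general d x₀ x₁ σ
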